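/- For the modified cross-entropy loss L_mce = −∑_i p(i|z₂,τ)·(q̃₁_i/τ) with q̃₁ = q₁/‖q₁‖, the squared gradient norm with respect to q₁ equals (‖P(z₂)‖²/(τ²‖q₁‖²))·(1 − ⟨q̃₁, P(z₂)/‖P(z₂)‖⟩²), and hence ‖∇_{q₁}L_mce‖ ≤ ‖P(z₂)‖/(τ‖q₁‖). -/

import Mathlib

open scoped BigOperators
open RealInnerProductSpace

noncomputable def softmax7 {C : ℕ} (τ : ℝ) (x : EuclideanSpace ℝ (Fin C)) :
    EuclideanSpace ℝ (Fin C) :=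
  WithLp.toLp 2 (fun i => Real.exp (x i / τ) / ∑ j, Real.exp (x j / τ))

/-!
The gradient of `q ↦ ⟪q / ‖q‖, p⟫` at `x ≠ 0` is `(p - ⟪u, p⟫ u) / ‖x‖` with `u = x / ‖x‖`: the
component of `p` orthogonal to `u`, scaled by `1 / ‖x‖`. By Pythagoras its squared norm is
`(‖p‖² - ⟪u, p⟫²) / ‖x‖²`, which is at most `‖p‖² / ‖x‖²`.
-/

section

variable {F : Type*} [NormedAddCommGroup F] [InnerProductSpace ℝ F]

theorem hasFDerivAt_norm {x : F} (hx : x ≠ 0) :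
    HasFDerivAt (‖·‖) (‖x‖⁻¹ • innerSL ℝ x) x := by
  have hsqrt := (Real.hasDerivAt_sqrt (pow_ne_zero 2 (norm_ne_zero_iff.mpr hx))).comp_hasFDerivAt
      x (hasStrictFDerivAt_norm_sq x).hasFDerivAt
  have hfun : (Real.sqrt ∘ fun q : F => ‖q‖ ^ 2) = (‖·‖) :=
    funext fun q => Real.sqrt_sq (norm_nonneg q)
  rw [hfun, Real.sqrt_sq (norm_nonneg x)] at hsqrt
  refine hsqrt.congr_fderiv ?_
  ext v
  simp only [smul_apply, innerSL_apply_apply, smul_eq_mul, nsmul_eq_mul, Nat.cast_ofNat]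
  field_simp

theorem HasGradientAt.const_mul [CompleteSpace F] {f : F → ℝ} {f' x : F}
    (h : HasGradientAt f f' x) (c : ℝ) :
    HasGradientAt (fun y => c * f y) (c • f') x := by
  rw [hasGradientAt_iff_hasFDerivAt, map_smul]
  exact h.hasFDerivAt.const_mul c

theorem norm_sub_inner_smul_sq {u : F} (hu : ‖u‖ = 1) (p : F) :
    ‖p - ⟪u, p⟫ • u‖ ^ 2 = ‖p‖ ^ 2 - ⟪u, p⟫ ^ 2 := by
  rw [norm_sub_sq_real, real_inner_smul_right, norm_smul, hu, mul_one, Real.norm_eq_abs, sq_abs,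
    real_inner_comm]
  ring

theorem norm_sub_inner_smul_le {u : F} (hu : ‖u‖ = 1) (p : F) :
    ‖p - ⟪u, p⟫ • u‖ ≤ ‖p‖ := by
  refine pow_le_pow_iff_left₀ (norm_nonneg _) (norm_nonneg _) two_ne_zero |>.mp ?_
  rw [norm_sub_inner_smul_sq hu]
  nlinarith [sq_nonneg ⟪u, p⟫]

theorem sq_norm_mul_one_sub_inner_normalize_sq (u p : F) :
    ‖p‖ ^ 2 * (1 - ⟪u, ‖p‖⁻¹ • p⟫ ^ 2) = ‖p‖ ^ 2 - ⟪u, p⟫ ^ 2 := by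
  rcases eq_or_ne p 0 with rfl | hp
  · simp
  · rw [real_inner_smul_right]
    field_simp

theorem hasGradientAt_inner_normalize [CompleteSpace F] (p : F) {x : F} (hx : x ≠ 0) :
    HasGradientAt (fun q => ⟪‖q‖⁻¹ • q, p⟫)
      (‖x‖⁻¹ • (p - ⟪‖x‖⁻¹ • x, p⟫ • ‖x‖⁻¹ • x)) x := by
  have hnx : ‖x‖ ≠ 0 := norm_ne_zero_iff.mpr hx
  have hinv := (hasDerivAt_inv hnx).comp_hasFDerivAt x (hasFDerivAt_norm hx)
  have hprod := hinv.mul (innerSL ℝ p).hasFDerivAt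
  have hfun : ((fun y => y⁻¹) ∘ (‖·‖) * ⇑(innerSL ℝ p)) = fun q : F => ⟪‖q‖⁻¹ • q, p⟫ :=
    funext fun q => by
      rw [Pi.mul_apply, Function.comp_apply, innerSL_apply_apply, real_inner_smul_left,
        real_inner_comm]
  rw [hfun] at hprod
  rw [hasGradientAt_iff_hasFDerivAt]
  refine hprod.congr_fderiv ?_
  ext v
  simp only [Function.comp_apply, coe_innerSL_apply, neg_smul, smul_neg, add_apply, smul_apply,
    smul_eq_mul, neg_apply, real_inner_comm, real_inner_smul_right, map_smul, map_sub, sub_apply,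
    InnerProductSpace.toDual_apply_apply]
  field_simp
  ring

end

theorem stmt_7_general {C : ℕ} (τ : ℝ) (hτ : 0 < τ)
    (q₁ z₂ : EuclideanSpace ℝ (Fin C)) (hq : q₁ ≠ 0) :
    ‖gradient (fun q : EuclideanSpace ℝ (Fin C) =>
        -(1 / τ) * ⟪‖q‖⁻¹ • q, softmax7 τ z₂⟫) q₁‖ ^ 2
        = ‖softmax7 τ z₂‖ ^ 2 / (τ ^ 2 * ‖q₁‖ ^ 2) *
            (1 - ⟪‖q₁‖⁻¹ • q₁, ‖softmax7 τ z₂‖⁻¹ • softmax7 τ z₂⟫ ^ 2) ∧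
      ‖gradient (fun q : EuclideanSpace ℝ (Fin C) =>
        -(1 / τ) * ⟪‖q‖⁻¹ • q, softmax7 τ z₂⟫) q₁‖
        ≤ ‖softmax7 τ z₂‖ / (τ * ‖q₁‖) := by
  set p := softmax7 τ z₂
  set u := ‖q₁‖⁻¹ • q₁
  have hu : ‖u‖ = 1 := norm_smul_inv_norm hq
  rw [((hasGradientAt_inner_normalize p hq).const_mul (-(1 / τ))).gradient, norm_smul,
    norm_smul, Real.norm_eq_abs, Real.norm_eq_abs, abs_neg, abs_of_pos (by positivity),
    abs_of_pos (by positivity)]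
  constructor
  · rw [mul_pow, mul_pow, norm_sub_inner_smul_sq hu, ← sq_norm_mul_one_sub_inner_normalize_sq u p]
    field_simp
  · calc 1 / τ * (‖q₁‖⁻¹ * ‖p - ⟪u, p⟫ • u‖) ≤ 1 / τ * (‖q₁‖⁻¹ * ‖p‖) := by
          gcongr; exact norm_sub_inner_smul_le hu p
      _ = ‖p‖ / (τ * ‖q₁‖) := by field_simp

theorem stmt_7 {C : ℕ} (hC : 1 ≤ C) (τ : ℝ) (hτ : 0 < τ)
    (q₁ z₂ : EuclideanSpace ℝ (Fin C)) (hq : q₁ ≠ 0) :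
    ‖gradient (fun q : EuclideanSpace ℝ (Fin C) =>
        -(1 / τ) * ⟪‖q‖⁻¹ • q, softmax7 τ z₂⟫) q₁‖ ^ 2
        = ‖softmax7 τ z₂‖ ^ 2 / (τ ^ 2 * ‖q₁‖ ^ 2) *
            (1 - ⟪‖q₁‖⁻¹ • q₁, ‖softmax7 τ z₂‖⁻¹ • softmax7 τ z₂⟫ ^ 2) ∧
      ‖gradient (fun q : EuclideanSpace ℝ (Fin C) =>
        -(1 / τ) * ⟪‖q‖⁻¹ • q, softmax7 τ z₂⟫) q₁‖
        ≤ ‖softmax7 τ z₂‖ / (τ * ‖q₁‖) :=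
  stmt_7_general τ hτ q₁ z₂ hq
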